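/- arXiv:1211.0573 — 5 statements merged into one kernel-verified Lean document; each statement's English description precedes it below -/
import Mathlib

section
/- For b ≥ 0 and q ≥ 1, the function h(x) = ∏_{i=1}^N (x_i² + b)·x_i^q defined on [0,∞)^N is Schur concave; i.e., if x majorizes y (both with nonnegative entries) then h(x) ≤ h(y). -/
/-!
On `(0, ∞)` the logarithm of `g t = (t ^ 2 + b) * t ^ q` is
`(q - 1) * log t + (log t + log (t ^ 2 + b))`, a sum of two concave functions.
For concave `f` and doubly stochastic `S`, Jensen's inequality on each row of `S`, summed
over the rows and regrouped along the unit column sums, gives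
`∑ j, f (x j) ≤ ∑ i, f ((S x) i)`. With `f = log ∘ g` this is the claim when all `x j > 0`;
if some `x j = 0`, the left-hand side vanishes.
-/

open Finset Real Matrix

section Stochastic

variable {𝕜 β n : Type*} [Field 𝕜] [LinearOrder 𝕜] [IsStrictOrderedRing 𝕜]
  [AddCommGroup β] [PartialOrder β] [IsOrderedAddMonoid β] [Module 𝕜 β]
  [IsStrictOrderedModule 𝕜 β] [Fintype n] [DecidableEq n]
  {M : Matrix n n 𝕜} {s : Set 𝕜} {f : 𝕜 → β} {x : n → 𝕜}

lemma Convex.mulVec_mem_of_mem_rowStochastic (hs : Convex 𝕜 s) (hM : M ∈ rowStochastic 𝕜 n)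
    (hx : ∀ j, x j ∈ s) (i : n) : (M *ᵥ x) i ∈ s :=
  hs.sum_mem (fun _ _ => nonneg_of_mem_rowStochastic hM) (sum_row_of_mem_rowStochastic hM i)
    fun j _ => hx j

lemma ConcaveOn.sum_smul_le_map_mulVec_of_mem_rowStochastic (hf : ConcaveOn 𝕜 s f)
    (hM : M ∈ rowStochastic 𝕜 n) (hx : ∀ j, x j ∈ s) (i : n) :
    ∑ j, M i j • f (x j) ≤ f ((M *ᵥ x) i) :=
  hf.le_map_sum (fun _ _ => nonneg_of_mem_rowStochastic hM) (sum_row_of_mem_rowStochastic hM i)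
    fun j _ => hx j

lemma ConcaveOn.sum_le_sum_map_mulVec_of_mem_doublyStochastic (hf : ConcaveOn 𝕜 s f)
    (hM : M ∈ doublyStochastic 𝕜 n) (hx : ∀ j, x j ∈ s) :
    ∑ j, f (x j) ≤ ∑ i, f ((M *ᵥ x) i) := by
  have hrow := (mem_doublyStochastic_iff_mem_rowStochastic_and_mem_colStochastic.1 hM).1
  calc ∑ j, f (x j) = ∑ j, (∑ i, M i j) • f (x j) := by
        simp only [sum_col_of_mem_doublyStochastic hM, one_smul]
    _ = ∑ i, ∑ j, M i j • f (x j) := by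
        simp only [sum_smul]
        exact sum_comm
    _ ≤ ∑ i, f ((M *ᵥ x) i) :=
        sum_le_sum fun i _ => hf.sum_smul_le_map_mulVec_of_mem_rowStochastic hrow hx i

end Stochastic

lemma concaveOn_log_add_log_sq_add {b : ℝ} (hb : 0 ≤ b) :
    ConcaveOn ℝ (Set.Ioi 0) fun t => log t + log (t ^ 2 + b) := by
  have hf' : ∀ t ∈ Set.Ioi (0 : ℝ),
      HasDerivAt (fun t => log t + log (t ^ 2 + b)) (t⁻¹ + 2 * t / (t ^ 2 + b)) t := by
    intro t (ht : 0 < t)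
    refine ((hasDerivAt_log ht.ne').add
      (((hasDerivAt_pow 2 t).add_const b).log (by positivity))).congr_deriv ?_
    norm_num
  have hf'' : ∀ t ∈ Set.Ioi (0 : ℝ), HasDerivAt (fun t => t⁻¹ + 2 * t / (t ^ 2 + b))
      (-(t ^ 2)⁻¹ + (2 * b - 2 * t ^ 2) / (t ^ 2 + b) ^ 2) t := by
    intro t (ht : 0 < t)
    refine ((hasDerivAt_inv ht.ne').add (((hasDerivAt_id t).const_mul 2).div
      ((hasDerivAt_pow 2 t).add_const b) (by positivity))).congr_deriv ?_
    norm_num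
    ring
  have hcont := HasDerivAt.continuousOn hf'
  rw [← interior_Ioi] at hf' hf''
  refine concaveOn_of_hasDerivWithinAt2_nonpos (convex_Ioi 0) hcont
    (fun t ht => (hf' t ht).hasDerivWithinAt) (fun t ht => (hf'' t ht).hasDerivWithinAt) ?_
  rw [interior_Ioi]
  intro t (ht : 0 < t)
  -- `(t ^ 2 + b) ^ 2 - (2 * b - 2 * t ^ 2) * t ^ 2 = 3 * t ^ 4 + b ^ 2`
  have : (2 * b - 2 * t ^ 2) / (t ^ 2 + b) ^ 2 ≤ (t ^ 2)⁻¹ := by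
    rw [← one_div, div_le_div_iff₀ (by positivity) (by positivity)]
    nlinarith [pow_nonneg ht.le 4, sq_nonneg b]
  linarith

lemma concaveOn_log_sq_add_mul_rpow {b q : ℝ} (hb : 0 ≤ b) (hq : 1 ≤ q) :
    ConcaveOn ℝ (Set.Ioi 0) fun t => log ((t ^ 2 + b) * t ^ q) := by
  refine ((strictConcaveOn_log_Ioi.concaveOn.smul (sub_nonneg.2 hq)).add
    (concaveOn_log_add_log_sq_add hb)).congr fun t (ht : 0 < t) => ?_
  simp only [Pi.add_apply, smul_eq_mul]
  rw [log_mul (by positivity) (by positivity), log_rpow ht]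
  ring

open Finset in
/-- For `b ≥ 0` and `q ≥ 1`, the function `h(x) = ∏ i, (x i ^ 2 + b) * x i ^ q`
on `[0,∞)^N` is Schur concave: if `x` majorizes `y` (equivalently, `y` is the image
of `x` under a doubly stochastic matrix), then `h x ≤ h y`. -/
theorem schur_concave_h {N : ℕ} (b q : ℝ) (hb : 0 ≤ b) (hq : 1 ≤ q)
    (x y : Fin N → ℝ) (hx : ∀ i, 0 ≤ x i) (hy : ∀ i, 0 ≤ y i)
    (hmaj : ∃ S ∈ doublyStochastic ℝ (Fin N), y = S.mulVec x) :
    ∏ i, (x i ^ 2 + b) * x i ^ q ≤ ∏ i, (y i ^ 2 + b) * y i ^ q := by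
  obtain ⟨S, hS, rfl⟩ := hmaj
  by_cases hx0 : ∃ j, x j = 0
  · obtain ⟨j, hj⟩ := hx0
    calc ∏ i, (x i ^ 2 + b) * x i ^ q = 0 :=
          prod_eq_zero (mem_univ j) (by simp [hj, zero_rpow (by linarith : q ≠ 0)])
      _ ≤ _ := prod_nonneg fun i _ => by have := hy i; positivity
  push Not at hx0
  have hxpos : ∀ j, x j ∈ Set.Ioi 0 := fun j => (hx j).lt_of_ne' (hx0 j)
  have hypos : ∀ i, (S *ᵥ x) i ∈ Set.Ioi 0 := (convex_Ioi 0).mulVec_mem_of_mem_rowStochastic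
    (mem_doublyStochastic_iff_mem_rowStochastic_and_mem_colStochastic.1 hS).1 hxpos
  have hpos : ∀ t ∈ Set.Ioi (0 : ℝ), 0 < (t ^ 2 + b) * t ^ q := fun t (ht : 0 < t) => by
    positivity
  rw [← log_le_log_iff (prod_pos fun j _ => hpos _ (hxpos j))
      (prod_pos fun i _ => hpos _ (hypos i)),
    log_prod fun j _ => (hpos _ (hxpos j)).ne', log_prod fun i _ => (hpos _ (hypos i)).ne']
  exact (concaveOn_log_sq_add_mul_rpow hb hq).sum_le_sum_map_mulVec_of_mem_doublyStochastic hS hxpos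
end

section
/- For b ≥ 0, q ≥ 1, and x_j, x_k ≥ 0, the expression (x_j − x_k)·(∂h/∂x_j − ∂h/∂x_k), where h(x) = ∏_{i=1}^N (x_i² + b)·x_i^q, is nonpositive; explicitly it equals −(x_j − x_k)²·(x_j x_k)^{q−1}·∏_{i∉{j,k}} (x_i² + b)x_i^q · [(q+2)x_j²x_k² + b(q−1)(x_j² + x_k²) + b(x_k − x_j)² + q b²]. -/
open Finset in
lemma deriv_h_aux {N : ℕ} (b q : ℝ) (hq : 1 ≤ q)
    (x : Fin N → ℝ) (hx : ∀ i, 0 < x i) (j : Fin N) :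
    deriv (fun t => ∏ i, ((Function.update x j t) i ^ 2 + b) *
        (Function.update x j t) i ^ q) (x j)
      = (2 * x j * x j ^ q + (x j ^ 2 + b) * (q * x j ^ (q - 1))) *
        ∏ i ∈ Finset.univ.erase j, (x i ^ 2 + b) * x i ^ q := by
  have hfun : (fun t => ∏ i, ((Function.update x j t) i ^ 2 + b) *
      (Function.update x j t) i ^ q)
      = fun t => ((t ^ 2 + b) * t ^ q) *
        ∏ i ∈ Finset.univ.erase j, (x i ^ 2 + b) * x i ^ q := by
    funext t
    have : (fun i => ((Function.update x j t) i ^ 2 + b) * (Function.update x j t) i ^ q)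
        = Function.update (fun i => (x i ^ 2 + b) * x i ^ q) j ((t ^ 2 + b) * t ^ q) := by
      funext i
      rcases eq_or_ne i j with rfl | h
      · simp
      · simp [Function.update_of_ne h]
    rw [this, Finset.prod_update_of_mem (Finset.mem_univ j), Finset.sdiff_singleton_eq_erase]
  rw [hfun]
  have h1 : HasDerivAt (fun t : ℝ => t ^ 2 + b) (2 * x j) (x j) := by
    simpa using (hasDerivAt_pow 2 (x j)).add_const b
  have h2 : HasDerivAt (fun t : ℝ => t ^ q) (q * x j ^ (q - 1)) (x j) :=
    Real.hasDerivAt_rpow_const (Or.inl (hx j).ne')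
  have h3 := ((h1.mul h2).mul_const
    (∏ i ∈ Finset.univ.erase j, (x i ^ 2 + b) * x i ^ q))
  exact h3.deriv

open Finset in
/-- Explicit formula and nonpositivity for `(x_j - x_k)(∂h/∂x_j - ∂h/∂x_k)` where
`h(x) = ∏ i, (x i ^ 2 + b) * x i ^ q`, derivatives taken in the interior. -/
theorem schur_condition_h {N : ℕ} (b q : ℝ) (hb : 0 ≤ b) (hq : 1 ≤ q)
    (x : Fin N → ℝ) (hx : ∀ i, 0 < x i) (j k : Fin N) (hjk : j ≠ k) :
    (x j - x k) *
        (deriv (fun t => ∏ i, ((Function.update x j t) i ^ 2 + b) *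
            (Function.update x j t) i ^ q) (x j)
          - deriv (fun t => ∏ i, ((Function.update x k t) i ^ 2 + b) *
            (Function.update x k t) i ^ q) (x k))
      = -(x j - x k) ^ 2 * (x j * x k) ^ (q - 1) *
        (∏ i ∈ (Finset.univ.erase j).erase k, (x i ^ 2 + b) * x i ^ q) *
        ((q + 2) * x j ^ 2 * x k ^ 2 + b * (q - 1) * (x j ^ 2 + x k ^ 2)
          + b * (x k - x j) ^ 2 + q * b ^ 2) ∧
    (x j - x k) *
        (deriv (fun t => ∏ i, ((Function.update x j t) i ^ 2 + b) *
            (Function.update x j t) i ^ q) (x j)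
          - deriv (fun t => ∏ i, ((Function.update x k t) i ^ 2 + b) *
            (Function.update x k t) i ^ q) (x k)) ≤ 0 := by
  have hd1 := deriv_h_aux b q hq x hx j
  have hd2 := deriv_h_aux b q hq x hx k
  have hkj : k ∈ Finset.univ.erase j := by
    simp [Finset.mem_erase, hjk.symm]
  have hjk' : j ∈ Finset.univ.erase k := by
    simp [Finset.mem_erase, hjk]
  have e1 : (∏ i ∈ Finset.univ.erase j, (x i ^ 2 + b) * x i ^ q)
      = ((x k ^ 2 + b) * x k ^ q) *
        ∏ i ∈ (Finset.univ.erase j).erase k, (x i ^ 2 + b) * x i ^ q :=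
    (Finset.mul_prod_erase _ _ hkj).symm
  have e2 : (∏ i ∈ Finset.univ.erase k, (x i ^ 2 + b) * x i ^ q)
      = ((x j ^ 2 + b) * x j ^ q) *
        ∏ i ∈ (Finset.univ.erase j).erase k, (x i ^ 2 + b) * x i ^ q := by
    rw [Finset.erase_right_comm]
    exact (Finset.mul_prod_erase _ _ hjk').symm
  have haq : x j ^ q = x j ^ (q - 1) * x j := by
    rw [← Real.rpow_add_one (hx j).ne', sub_add_cancel]
  have hcq : x k ^ q = x k ^ (q - 1) * x k := by
    rw [← Real.rpow_add_one (hx k).ne', sub_add_cancel]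
  have hmul : (x j * x k) ^ (q - 1) = x j ^ (q - 1) * x k ^ (q - 1) :=
    Real.mul_rpow (hx j).le (hx k).le
  have heq : (x j - x k) *
        (deriv (fun t => ∏ i, ((Function.update x j t) i ^ 2 + b) *
            (Function.update x j t) i ^ q) (x j)
          - deriv (fun t => ∏ i, ((Function.update x k t) i ^ 2 + b) *
            (Function.update x k t) i ^ q) (x k))
      = -(x j - x k) ^ 2 * (x j * x k) ^ (q - 1) *
        (∏ i ∈ (Finset.univ.erase j).erase k, (x i ^ 2 + b) * x i ^ q) *
        ((q + 2) * x j ^ 2 * x k ^ 2 + b * (q - 1) * (x j ^ 2 + x k ^ 2)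
          + b * (x k - x j) ^ 2 + q * b ^ 2) := by
    rw [hd1, hd2, e1, e2, haq, hcq, hmul]
    ring
  refine ⟨heq, ?_⟩
  rw [heq]
  have hP : 0 ≤ ∏ i ∈ (Finset.univ.erase j).erase k, (x i ^ 2 + b) * x i ^ q :=
    Finset.prod_nonneg fun i _ => mul_nonneg (by positivity) (Real.rpow_nonneg (hx i).le _)
  have hX : (0:ℝ) ≤ (x j * x k) ^ (q - 1) := Real.rpow_nonneg (mul_nonneg (hx j).le (hx k).le) _
  have hB : (0:ℝ) ≤ (q + 2) * x j ^ 2 * x k ^ 2 + b * (q - 1) * (x j ^ 2 + x k ^ 2)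
      + b * (x k - x j) ^ 2 + q * b ^ 2 := by
    have h1 : (0:ℝ) ≤ (q + 2) * x j ^ 2 * x k ^ 2 := by positivity
    have h2 : (0:ℝ) ≤ b * (q - 1) * (x j ^ 2 + x k ^ 2) :=
      mul_nonneg (mul_nonneg hb (by linarith)) (by positivity)
    have h3 : (0:ℝ) ≤ b * (x k - x j) ^ 2 := by positivity
    have h4 : (0:ℝ) ≤ q * b ^ 2 := by positivity
    linarith
  have : -(x j - x k) ^ 2 * (x j * x k) ^ (q - 1) *
      (∏ i ∈ (Finset.univ.erase j).erase k, (x i ^ 2 + b) * x i ^ q) *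
      ((q + 2) * x j ^ 2 * x k ^ 2 + b * (q - 1) * (x j ^ 2 + x k ^ 2)
        + b * (x k - x j) ^ 2 + q * b ^ 2)
      = -((x j - x k) ^ 2 * ((x j * x k) ^ (q - 1) *
        ((∏ i ∈ (Finset.univ.erase j).erase k, (x i ^ 2 + b) * x i ^ q) *
        ((q + 2) * x j ^ 2 * x k ^ 2 + b * (q - 1) * (x j ^ 2 + x k ^ 2)
          + b * (x k - x j) ^ 2 + q * b ^ 2)))) := by ring
  rw [this]
  exact neg_nonpos_of_nonneg (mul_nonneg (sq_nonneg _)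
    (mul_nonneg hX (mul_nonneg hP hB)))
end

section
/- Let ρ be an N²×N² positive semidefinite matrix with trace 1, indexed by pairs (m,μ) with m,μ ∈ {1,…,N}, whose partial transpose ρ^{T_A} (swapping the first indices: entry ((m,μ),(n,ν)) ↦ entry ((n,μ),(m,ν))) is also positive semidefinite. Then (∏_{j,k=1}^N |ρ_{(j,j),(k,k)}|)^{1/N} ≤ N^{−2N}. -/
/-! The partial transpose `σ` of `ρ` is positive semidefinite, has the same diagonal as `ρ`, and
`ρ_{(j,j),(k,k)} = σ_{(k,j),(j,k)}`. The 2 × 2 principal minors of `σ` give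
`|σ_{pq}|² ≤ σ_{pp} σ_{qq}`, so the product of the `|ρ_{(j,j),(k,k)}|` is at most the product of the
`N²` diagonal entries of `ρ`. These sum to `1`, so by AM-GM their product is at most `(N⁻²)^{N²}`. -/

open Finset RCLike
open scoped ComplexOrder

theorem prod_le_inv_card_pow_card {ι : Type*} [Fintype ι] {z : ι → ℝ} (hz : ∀ i, 0 ≤ z i)
    (hsum : ∑ i, z i = 1) :
    ∏ i, z i ≤ ((Fintype.card ι : ℝ)⁻¹) ^ Fintype.card ι := by
  have hcard : Fintype.card ι ≠ 0 := by
    rintro h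
    simp [Fintype.card_eq_zero_iff.mp h] at hsum
  have hamgm := Real.geom_mean_le_arith_mean_weighted univ (fun _ ↦ (Fintype.card ι : ℝ)⁻¹) z
    (fun _ _ ↦ by positivity) (by simp [card_univ, hcard]) (fun i _ ↦ hz i)
  rw [← mul_sum, hsum, mul_one, Real.finsetProd_rpow _ _ fun i _ ↦ hz i] at hamgm
  calc ∏ i, z i = ((∏ i, z i) ^ (Fintype.card ι : ℝ)⁻¹) ^ Fintype.card ι :=
        (Real.rpow_inv_natCast_pow (prod_nonneg fun i _ ↦ hz i) hcard).symm
    _ ≤ _ := pow_le_pow_left₀ (Real.rpow_nonneg (prod_nonneg fun i _ ↦ hz i) _) hamgm _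

namespace Matrix.PosSemidef

variable {n 𝕜 : Type*} [RCLike 𝕜] {M : Matrix n n 𝕜}

theorem re_apply_self_nonneg (hM : M.PosSemidef) (i : n) : 0 ≤ re (M i i) :=
  (RCLike.nonneg_iff.mp hM.diag_nonneg).1

theorem norm_sq_apply_le (hM : M.PosSemidef) (i j : n) :
    ‖M i j‖ ^ 2 ≤ re (M i i) * re (M j j) := by
  have hdet := (hM.submatrix ![i, j]).det_nonneg
  rw [det_fin_two] at hdet
  simp only [submatrix_apply, Matrix.cons_val_zero, Matrix.cons_val_one] at hdet
  rw [← hM.isHermitian.apply j i, RCLike.star_def, RCLike.mul_conj,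
    ← hM.isHermitian.coe_re_apply_self i, ← hM.isHermitian.coe_re_apply_self j] at hdet
  exact_mod_cast sub_nonneg.mp hdet

theorem prod_norm_apply_perm_le [Fintype n] (hM : M.PosSemidef) (e : Equiv.Perm n) :
    ∏ i, ‖M i (e i)‖ ≤ ∏ i, re (M i i) := by
  refine le_of_pow_le_pow_left₀ two_ne_zero
    (prod_nonneg fun i _ ↦ hM.re_apply_self_nonneg i) ?_
  calc (∏ i, ‖M i (e i)‖) ^ 2 = ∏ i, ‖M i (e i)‖ ^ 2 := (prod_pow _ _ _).symm
    _ ≤ ∏ i, re (M i i) * re (M (e i) (e i)) :=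
        prod_le_prod (fun i _ ↦ by positivity) fun i _ ↦ hM.norm_sq_apply_le i (e i)
    _ = (∏ i, re (M i i)) ^ 2 := by
        rw [prod_mul_distrib, Equiv.prod_comp e fun i ↦ re (M i i), sq]

theorem prod_re_diag_le [Fintype n] (hM : M.PosSemidef) (htr : M.trace = 1) :
    ∏ i, re (M i i) ≤ ((Fintype.card n : ℝ)⁻¹) ^ Fintype.card n :=
  prod_le_inv_card_pow_card hM.re_apply_self_nonneg <| by
    simpa [trace, ← map_sum] using congrArg re htr

end Matrix.PosSemidef

theorem natCast_mul_self_inv_pow_mul_self_rpow_one_div {N : ℕ} (hN : N ≠ 0) :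
    (((N * N : ℕ) : ℝ)⁻¹ ^ (N * N)) ^ ((1 : ℝ) / N) = (N : ℝ) ^ (-(2 * N : ℝ)) := by
  have hbase : ((N * N : ℕ) : ℝ)⁻¹ = (N : ℝ) ^ (-2 : ℝ) := by
    rw [Real.rpow_neg (Nat.cast_nonneg N), Real.rpow_two, sq, Nat.cast_mul]
  have hpow : ((N * N : ℕ) : ℝ)⁻¹ ^ (N * N) = ((N : ℝ) ^ (-(2 * N : ℝ))) ^ N := by
    rw [hbase, ← Real.rpow_natCast, ← Real.rpow_natCast, ← Real.rpow_mul (Nat.cast_nonneg N),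
      ← Real.rpow_mul (Nat.cast_nonneg N)]
    congr 1
    push_cast
    ring
  rw [hpow, one_div, Real.pow_rpow_inv_natCast (by positivity) hN]

open Finset in
open scoped ComplexOrder in
theorem collectibility_PPT_bound_general {N : ℕ}
    (ρ : Matrix (Fin N × Fin N) (Fin N × Fin N) ℂ)
    (htr : ρ.trace = 1)
    (hPPT : (Matrix.of fun p q : Fin N × Fin N => ρ (q.1, p.2) (p.1, q.2)).PosSemidef) :
    (∏ j : Fin N, ∏ k : Fin N, ‖ρ (j, j) (k, k)‖) ^ ((1 : ℝ) / N)
      ≤ (N : ℝ) ^ (-(2 * N : ℝ)) := by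
  set σ := Matrix.of fun p q : Fin N × Fin N => ρ (q.1, p.2) (p.1, q.2)
  have hN : N ≠ 0 := by
    rintro rfl
    simp at htr
  have hσtr : σ.trace = 1 := htr
  have hprod : ∏ j, ∏ k, ‖ρ (j, j) (k, k)‖ = ∏ p, ‖σ p (Equiv.prodComm _ _ p)‖ := by
    rw [Fintype.prod_prod_type, prod_comm]
    rfl
  have hcard : Fintype.card (Fin N × Fin N) = N * N := by simp
  calc _ ≤ (∏ p, re (σ p p)) ^ ((1 : ℝ) / N) :=
        Real.rpow_le_rpow (by positivity) (hprod ▸ hPPT.prod_norm_apply_perm_le _)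
          (by positivity)
    _ ≤ (((N * N : ℕ) : ℝ)⁻¹ ^ (N * N)) ^ ((1 : ℝ) / N) :=
        Real.rpow_le_rpow (prod_nonneg fun p _ ↦ hPPT.re_apply_self_nonneg p)
          (hcard ▸ hPPT.prod_re_diag_le hσtr) (by positivity)
    _ = _ := natCast_mul_self_inv_pow_mul_self_rpow_one_div hN

open Finset in
open scoped ComplexOrder in
/-- If a bipartite density matrix `ρ` on `ℂ^N ⊗ ℂ^N` has positive partial transpose,
then `(∏_{j,k} |ρ_{(j,j),(k,k)}|)^{1/N} ≤ N^{-2N}`. -/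
theorem collectibility_PPT_bound {N : ℕ} (hN : 0 < N)
    (ρ : Matrix (Fin N × Fin N) (Fin N × Fin N) ℂ)
    (hρ : ρ.PosSemidef) (htr : ρ.trace = 1)
    (hPPT : (Matrix.of fun p q : Fin N × Fin N => ρ (q.1, p.2) (p.1, q.2)).PosSemidef) :
    (∏ j : Fin N, ∏ k : Fin N, ‖ρ (j, j) (k, k)‖) ^ ((1 : ℝ) / N)
      ≤ (N : ℝ) ^ (-(2 * N : ℝ)) :=
  collectibility_PPT_bound_general ρ htr hPPT
end

section
/- Let |ψ_λ⟩ = Σ_{n=1}^N √λ_n |nn⟩ be a unit vector in ℂ^N ⊗ ℂ^N with λ a probability vector. Then the maximum over all pairs of unitaries U, V of ∏_{j=1}^N |⟨ψ_λ| (U⊗V) |jj⟩|² equals ((Σ_n √λ_n)/N)^{2N}. -/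
/-!
Write `z j = ∑ n, √λ n * U n j * V n j`. The triangle inequality and Cauchy–Schwarz on the
rows of `U` and `V` give `∑ j, ‖z j‖ ≤ ∑ n, √λ n`, so AM–GM bounds `∏ j, ‖z j‖ ^ 2` by
`((∑ n, √λ n) / N) ^ (2 * N)`. The bound is attained by a unitary `U` all of whose entries have
modulus `1 / √N` (the normalized Fourier matrix of `ZMod N`) together with `V = conj U`:
then `U n j * V n j = 1 / N` and every `z j` equals `(∑ n, √λ n) / N`.
-/
open Finset Matrix

theorem Real.prod_le_mean_pow_card {ι : Type*} (s : Finset ι) {f : ι → ℝ}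
    (hf : ∀ i ∈ s, 0 ≤ f i) : ∏ i ∈ s, f i ≤ ((∑ i ∈ s, f i) / #s) ^ #s := by
  rcases s.eq_empty_or_nonempty with rfl | hs
  · simp
  have hcard : (0 : ℝ) < #s := by exact_mod_cast hs.card_pos
  have amgm := Real.geom_mean_le_arith_mean s (fun _ ↦ 1) f (fun _ _ ↦ zero_le_one)
    (by simpa using hcard) hf
  simp only [Real.rpow_one, sum_const, nsmul_eq_mul, mul_one, one_mul] at amgm
  have hprod : 0 ≤ ∏ i ∈ s, f i := prod_nonneg hf
  calc ∏ i ∈ s, f i = ((∏ i ∈ s, f i) ^ (#s : ℝ)⁻¹) ^ #s := by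
        rw [← Real.rpow_natCast, ← Real.rpow_mul hprod, inv_mul_cancel₀ hcard.ne', Real.rpow_one]
    _ ≤ ((∑ i ∈ s, f i) / #s) ^ #s := by gcongr

namespace Matrix

variable {ι κ 𝕜 : Type*} [Fintype ι] [RCLike 𝕜]

theorem prod_norm_sq_sum_mul_map_star {U : Matrix ι ι 𝕜}
    (hflat : ∀ i j, ‖U i j‖ ^ 2 = (Fintype.card ι : ℝ)⁻¹) {a : ι → ℝ} (ha : ∀ n, 0 ≤ a n) :
    ∏ j, ‖∑ n, (a n : 𝕜) * U n j * U.map star n j‖ ^ 2 =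
      ((∑ n, a n) / Fintype.card ι) ^ (2 * Fintype.card ι) := by
  have hcol (j : ι) :
      ∑ n, (a n : 𝕜) * U n j * U.map star n j = ((∑ n, a n) / Fintype.card ι : ℝ) := by
    simp only [map_apply, RCLike.star_def, mul_assoc, RCLike.mul_conj, ← RCLike.ofReal_pow, hflat,
      ← RCLike.ofReal_mul, ← RCLike.ofReal_sum, ← sum_mul, div_eq_mul_inv]
  have hmean : 0 ≤ (∑ n, a n) / Fintype.card ι :=
    div_nonneg (sum_nonneg fun n _ ↦ ha n) (Nat.cast_nonneg _)
  simp_rw [hcol, RCLike.norm_ofReal, abs_of_nonneg hmean, prod_const, card_univ, ← pow_mul]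

variable [DecidableEq ι]

theorem sum_norm_sq_eq_one_of_mem_unitaryGroup {U : Matrix ι ι 𝕜}
    (hU : U ∈ unitaryGroup ι 𝕜) (i : ι) : ∑ j, ‖U i j‖ ^ 2 = 1 := by
  have hii := congr_fun₂ (mem_unitaryGroup_iff.mp hU) i i
  simp only [mul_apply, star_apply, RCLike.star_def, RCLike.mul_conj, one_apply_eq] at hii
  exact_mod_cast hii

theorem sum_norm_mul_norm_le_one_of_mem_unitaryGroup {U V : Matrix ι ι 𝕜}
    (hU : U ∈ unitaryGroup ι 𝕜) (hV : V ∈ unitaryGroup ι 𝕜) (i k : ι) :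
    ∑ j, ‖U i j‖ * ‖V k j‖ ≤ 1 := by
  simpa [sum_norm_sq_eq_one_of_mem_unitaryGroup hU, sum_norm_sq_eq_one_of_mem_unitaryGroup hV]
    using Real.sum_mul_le_sqrt_mul_sqrt univ (fun j ↦ ‖U i j‖) (fun j ↦ ‖V k j‖)

theorem sum_norm_sum_mul_le_of_mem_unitaryGroup {U V : Matrix ι ι 𝕜}
    (hU : U ∈ unitaryGroup ι 𝕜) (hV : V ∈ unitaryGroup ι 𝕜) {a : ι → ℝ} (ha : ∀ n, 0 ≤ a n) :
    ∑ j, ‖∑ n, (a n : 𝕜) * U n j * V n j‖ ≤ ∑ n, a n :=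
  calc ∑ j, ‖∑ n, (a n : 𝕜) * U n j * V n j‖
      ≤ ∑ j, ∑ n, a n * (‖U n j‖ * ‖V n j‖) := by
        refine sum_le_sum fun j _ ↦ (norm_sum_le _ _).trans_eq (sum_congr rfl fun n _ ↦ ?_)
        rw [norm_mul, norm_mul, RCLike.norm_ofReal, abs_of_nonneg (ha n), mul_assoc]
    _ = ∑ n, a n * ∑ j, ‖U n j‖ * ‖V n j‖ := by rw [sum_comm]; simp only [mul_sum]
    _ ≤ ∑ n, a n := sum_le_sum fun n _ ↦
        mul_le_of_le_one_right (ha n) (sum_norm_mul_norm_le_one_of_mem_unitaryGroup hU hV n n)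

theorem prod_norm_sq_sum_mul_le_of_mem_unitaryGroup {U V : Matrix ι ι 𝕜}
    (hU : U ∈ unitaryGroup ι 𝕜) (hV : V ∈ unitaryGroup ι 𝕜) {a : ι → ℝ} (ha : ∀ n, 0 ≤ a n) :
    ∏ j, ‖∑ n, (a n : 𝕜) * U n j * V n j‖ ^ 2 ≤
      ((∑ n, a n) / Fintype.card ι) ^ (2 * Fintype.card ι) := by
  have amgm := Real.prod_le_mean_pow_card univ
    (fun j _ ↦ norm_nonneg (∑ n, (a n : 𝕜) * U n j * V n j))
  rw [card_univ] at amgm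
  rw [prod_pow, mul_comm, pow_mul]
  gcongr
  exact amgm.trans <| pow_le_pow_left₀ (by positivity) (div_le_div_of_nonneg_right
    (sum_norm_sum_mul_le_of_mem_unitaryGroup hU hV ha) (Nat.cast_nonneg _)) _

theorem submatrix_equiv_mem_unitaryGroup {U : Matrix κ κ 𝕜} [Fintype κ] [DecidableEq κ]
    (hU : U ∈ unitaryGroup κ 𝕜) (e : ι ≃ κ) : U.submatrix e e ∈ unitaryGroup ι 𝕜 := by
  rw [mem_unitaryGroup_iff, star_eq_conjTranspose, conjTranspose_submatrix, submatrix_mul_equiv,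
    ← star_eq_conjTranspose, mem_unitaryGroup_iff.mp hU, submatrix_one_equiv]

end Matrix

namespace ZMod

noncomputable def fourierMatrix (N : ℕ) [NeZero N] : Matrix (ZMod N) (ZMod N) ℂ :=
  Matrix.of fun i j ↦ stdAddChar (i * j) / (Real.sqrt N : ℂ)

variable {N : ℕ} [NeZero N]

theorem norm_fourierMatrix_apply_sq (i j : ZMod N) : ‖fourierMatrix N i j‖ ^ 2 = (N : ℝ)⁻¹ := by
  simp [fourierMatrix]

theorem fourierMatrix_mem_unitaryGroup : fourierMatrix N ∈ Matrix.unitaryGroup (ZMod N) ℂ := by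
  rw [Matrix.mem_unitaryGroup_iff]
  ext i k
  have hN : (Real.sqrt N : ℂ) * Real.sqrt N = N := by
    rw [← Complex.ofReal_mul, Real.mul_self_sqrt (Nat.cast_nonneg N), Complex.ofReal_natCast]
  have hterm (j : ZMod N) : fourierMatrix N i j * star (fourierMatrix N k j) =
      stdAddChar (j * (i - k)) / N := by
    rw [fourierMatrix, Matrix.of_apply, Matrix.of_apply, star_div₀, Complex.star_def,
      Complex.conj_ofReal, ← AddChar.map_neg_eq_conj, div_mul_div_comm, hN,
      ← AddChar.map_add_eq_mul]
    ring_nf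
  simp only [Matrix.mul_apply, Matrix.star_apply, hterm, ← sum_div,
    AddChar.sum_mulShift _ (isPrimitive_stdAddChar N), sub_eq_zero, ZMod.card, Matrix.one_apply]
  split_ifs <;> simp [NeZero.ne]

end ZMod

theorem Matrix.exists_mem_unitaryGroup_norm_sq_eq (ι : Type*) [Fintype ι] [DecidableEq ι] :
    ∃ U ∈ unitaryGroup ι ℂ, ∀ i j, ‖U i j‖ ^ 2 = (Fintype.card ι : ℝ)⁻¹ := by
  rcases isEmpty_or_nonempty ι with hι | hι
  · exact ⟨1, one_mem _, isEmptyElim⟩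
  have : NeZero (Fintype.card ι) := ⟨Fintype.card_ne_zero⟩
  let e : ι ≃ ZMod (Fintype.card ι) := Fintype.equivOfCardEq (ZMod.card _).symm
  exact ⟨_, submatrix_equiv_mem_unitaryGroup ZMod.fourierMatrix_mem_unitaryGroup e,
    fun i j ↦ by simpa using ZMod.norm_fourierMatrix_apply_sq (e i) (e j)⟩

open Finset in
theorem pure_state_collectibility_schmidt_general {N : ℕ} (l : Fin N → ℝ) :
    IsGreatest
      { y : ℝ | ∃ U ∈ Matrix.unitaryGroup (Fin N) ℂ, ∃ V ∈ Matrix.unitaryGroup (Fin N) ℂ,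
          y = ∏ j : Fin N, ‖∑ n : Fin N, (Real.sqrt (l n) : ℂ) * U n j * V n j‖ ^ 2 }
      (((∑ n, Real.sqrt (l n)) / N) ^ (2 * N)) := by
  have hsqrt (n : Fin N) : 0 ≤ Real.sqrt (l n) := Real.sqrt_nonneg _
  constructor
  · obtain ⟨U, hU, hflat⟩ := exists_mem_unitaryGroup_norm_sq_eq (Fin N)
    refine ⟨U, hU, U.map star, map_star_mem_unitaryGroup_iff.mpr hU, ?_⟩
    simpa using (prod_norm_sq_sum_mul_map_star hflat hsqrt).symm
  · rintro _ ⟨U, hU, V, hV, rfl⟩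
    simpa using prod_norm_sq_sum_mul_le_of_mem_unitaryGroup hU hV hsqrt

open Finset in
/-- The pure-state collectibility of `|ψ_λ⟩ = Σ √λ_n |nn⟩`:
the maximum over unitaries `U, V` of `∏_j |⟨ψ_λ|(U⊗V)|jj⟩|²` equals
`((Σ_n √λ_n)/N)^{2N}`. -/
theorem pure_state_collectibility_schmidt {N : ℕ} (hN : 0 < N)
    (l : Fin N → ℝ) (hl : ∀ n, 0 ≤ l n) (hsum : ∑ n, l n = 1) :
    IsGreatest
      { y : ℝ | ∃ U ∈ Matrix.unitaryGroup (Fin N) ℂ, ∃ V ∈ Matrix.unitaryGroup (Fin N) ℂ,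
          y = ∏ j : Fin N, ‖∑ n : Fin N, (Real.sqrt (l n) : ℂ) * U n j * V n j‖ ^ 2 }
      (((∑ n, Real.sqrt (l n)) / N) ^ (2 * N)) :=
  pure_state_collectibility_schmidt_general l
end

section
/- Let ρ_w = α (U⊗V)|ψ_λ⟩⟨ψ_λ|(U⊗V)† + (1−α)/N² · I be the generalized Werner state on ℂ^N ⊗ ℂ^N, with α ∈ [0,1]. Then the mixed-state collectibility Y^max[ρ_w] = (max over orthonormal separable bases {|χ_j^sep⟩} of ∏_{j,k=1}^N ⟨χ_j^sep|ρ_w|χ_k^sep⟩)^{1/N} equals α^{N−1} y(λ) (α + ((1−α)/N²)·y(λ)^{−1/N}), where y(λ) = ((Σ_n √λ_n)/N)^{2N}. -/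
/-!
Let `z_j = ⟨ψ|χ_j⟩` be the overlaps of `ψ = (U ⊗ V)|ψ_λ⟩` with the product basis.
As `ρ_w = α|ψ⟩⟨ψ| + c·I` with `c = (1-α)/N²`, the entries are `α z̄_j z_k + c δ_jk`,
and the product of all `N²` of them is `α^{N(N-1)} ∏_j |z_j|^{2(N-1)} (α|z_j|² + c)`.
In the Schmidt frame `z_j = ∑_n √λ_n P_{nj} Q_{nj}` with `P, Q` unitary, so AM-GM on
the rows of `P` and `Q` gives `∑_j |z_j| ≤ ∑_n √λ_n`. Since `u ↦ u^{2(N-1)} (α u² + c)`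
is increasing and log-concave on `(0, ∞)`, Jensen's inequality makes the product
largest when every `|z_j|` equals `(∑_n √λ_n) / N`, and the discrete Fourier basis
attains this.
-/

open Finset Matrix

section LogConcave

open Real

theorem mul_sq_add_pos {α c u : ℝ} (hα : 0 ≤ α) (hc : 0 ≤ c) (hαc : 0 < α ∨ 0 < c)
    (hu : 0 < u) : 0 < α * u ^ 2 + c := by
  rcases hαc with h | h <;> positivity

theorem prod_le_pow_of_concaveOn_log {ι : Type*} [Fintype ι] [Nonempty ι] {f : ℝ → ℝ}
    {D : Set ℝ} (hpos : ∀ x ∈ D, 0 < f x) (hf : ConcaveOn ℝ D fun x => log (f x))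
    {t : ι → ℝ} (ht : ∀ i, t i ∈ D) :
    ∏ i, f (t i) ≤ f ((∑ i, t i) / Fintype.card ι) ^ Fintype.card ι := by
  set N : ℝ := (Fintype.card ι : ℝ)
  have hN : 0 < N := Nat.cast_pos.mpr Fintype.card_pos
  have hw : ∑ _i : ι, N⁻¹ = 1 := by simp [N, hN.ne']
  have hmean : ∑ i, N⁻¹ • t i = (∑ i, t i) / N := by
    simp only [smul_eq_mul, inv_mul_eq_div]
    rw [sum_div]
  have jensen := hf.le_map_sum (t := univ) (fun _ _ => (inv_pos.mpr hN).le) hw (fun i _ => ht i)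
  rw [hmean, ← smul_sum, smul_eq_mul, inv_mul_le_iff₀ hN] at jensen
  have hmean_mem : (∑ i, t i) / N ∈ D :=
    hmean ▸ hf.1.sum_mem (fun _ _ => (inv_pos.mpr hN).le) hw (fun i _ => ht i)
  rw [← log_le_log_iff (prod_pos fun i _ => hpos _ (ht i)) (pow_pos (hpos _ hmean_mem) _),
    log_prod fun i _ => (hpos _ (ht i)).ne', log_pow]
  exact jensen

theorem concaveOn_log_pow_mul_sq_add {k : ℕ} (hk : 1 ≤ k) {α c : ℝ} (hα : 0 ≤ α)
    (hc : 0 ≤ c) (hαc : 0 < α ∨ 0 < c) :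
    ConcaveOn ℝ (Set.Ioi 0) fun u => log (u ^ k * (α * u ^ 2 + c)) := by
  have hq : ∀ u : ℝ, 0 < u → 0 < α * u ^ 2 + c := fun u => mul_sq_add_pos hα hc hαc
  have hquad : ∀ u : ℝ, HasDerivAt (fun u => α * u ^ 2 + c) (2 * α * u) u := fun u => by
    simpa [mul_comm, mul_assoc, mul_left_comm] using
      ((hasDerivAt_pow 2 u).const_mul α).add_const c
  have hd1 : ∀ u : ℝ, 0 < u → HasDerivAt (fun u => k * log u + log (α * u ^ 2 + c))
      (k * u⁻¹ + 2 * α * u / (α * u ^ 2 + c)) u := fun u hu =>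
    ((hasDerivAt_log hu.ne').const_mul _).add ((hquad u).log (hq u hu).ne')
  have hd2 : ∀ u : ℝ, 0 < u → HasDerivAt (fun u => k * u⁻¹ + 2 * α * u / (α * u ^ 2 + c))
      (-k / u ^ 2 + (2 * α * c - 2 * α ^ 2 * u ^ 2) / (α * u ^ 2 + c) ^ 2) u := fun u hu =>
    (((hasDerivAt_inv hu.ne').const_mul (k : ℝ)).add
      (((hasDerivAt_id' u).const_mul (2 * α)).div (hquad u) (hq u hu).ne')).congr_deriv (by
        field_simp
        ring)
  have hsign : ∀ u : ℝ, 0 < u →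
      -k / u ^ 2 + (2 * α * c - 2 * α ^ 2 * u ^ 2) / (α * u ^ 2 + c) ^ 2 ≤ 0 := fun u hu => by
    have hk' : (1 : ℝ) ≤ k := by exact_mod_cast hk
    rw [neg_div, neg_add_nonpos_iff, div_le_div_iff₀ (by nlinarith [hq u hu]) (by positivity)]
    nlinarith [mul_nonneg (mul_nonneg hα hc) (sq_nonneg u), sq_nonneg (α * u ^ 2 + c),
      mul_nonneg (sub_nonneg.mpr hk') (sq_nonneg (α * u ^ 2 + c)), sq_nonneg (α * u ^ 2),
      sq_nonneg u]
  have hconc := concaveOn_of_hasDerivWithinAt2_nonpos (convex_Ioi 0)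
    (fun u hu => (hd1 u hu).continuousAt.continuousWithinAt)
    (by rw [interior_Ioi]; exact fun u hu => (hd1 u hu).hasDerivWithinAt)
    (by rw [interior_Ioi]; exact fun u hu => (hd2 u hu).hasDerivWithinAt)
    (by rw [interior_Ioi]; exact hsign)
  refine hconc.congr fun u hu => ?_
  dsimp only
  rw [log_mul (pow_pos hu k).ne' (hq u hu).ne', log_pow]

theorem prod_pow_mul_sq_add_le_pow_mean {ι : Type*} [Fintype ι] {α c : ℝ} (hα : 0 ≤ α)
    (hc : 0 ≤ c) (hαc : 0 < α ∨ 0 < c) {t : ι → ℝ} (ht : ∀ i, 0 ≤ t i) :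
    ∏ i, t i ^ (2 * (Fintype.card ι - 1)) * (α * t i ^ 2 + c) ≤
      (((∑ i, t i) / Fintype.card ι) ^ (2 * (Fintype.card ι - 1)) *
        (α * ((∑ i, t i) / Fintype.card ι) ^ 2 + c)) ^ Fintype.card ι := by
  rcases Nat.lt_or_ge (Fintype.card ι) 2 with hN | hN
  · interval_cases h : Fintype.card ι
    · simp [Fintype.card_eq_zero_iff.mp h]
    · obtain ⟨i, hi⟩ := Fintype.card_eq_one_iff.mp h
      have : Unique ι := ⟨⟨i⟩, hi⟩
      simp
  by_cases hzero : ∃ i, t i = 0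
  · obtain ⟨i, hi⟩ := hzero
    rw [prod_eq_zero (mem_univ i) (by rw [hi, zero_pow (by omega), zero_mul])]
    have : 0 ≤ (∑ i, t i) / Fintype.card ι :=
      div_nonneg (sum_nonneg fun i _ => ht i) (by positivity)
    positivity
  push Not at hzero
  have : Nonempty ι := Fintype.card_pos_iff.mp (by omega)
  exact prod_le_pow_of_concaveOn_log (D := Set.Ioi 0)
    (fun u hu => mul_pos (pow_pos hu _) (mul_sq_add_pos hα hc hαc hu))
    (concaveOn_log_pow_mul_sq_add (by omega) hα hc hαc)
    fun i => lt_of_le_of_ne (ht i) (hzero i).symm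

theorem prod_pow_mul_sq_add_le {ι : Type*} [Fintype ι] {α c s : ℝ} (hα : 0 ≤ α)
    (hc : 0 ≤ c) (hαc : 0 < α ∨ 0 < c) {t : ι → ℝ} (ht : ∀ i, 0 ≤ t i) (hts : ∑ i, t i ≤ s) :
    ∏ i, t i ^ (2 * (Fintype.card ι - 1)) * (α * t i ^ 2 + c) ≤
      ((s / Fintype.card ι) ^ (2 * (Fintype.card ι - 1)) *
        (α * (s / Fintype.card ι) ^ 2 + c)) ^ Fintype.card ι := by
  refine (prod_pow_mul_sq_add_le_pow_mean hα hc hαc ht).trans ?_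
  have hmean : 0 ≤ (∑ i, t i) / Fintype.card ι :=
    div_nonneg (sum_nonneg fun i _ => ht i) (by positivity)
  have hs : 0 ≤ s / Fintype.card ι := hmean.trans (by gcongr)
  gcongr

end LogConcave

section Unitary

variable {n : Type*} [Fintype n] [DecidableEq n]

theorem transpose_of_mem_unitaryGroup_iff {a : n → n → ℂ} :
    (of a)ᵀ ∈ unitaryGroup n ℂ ↔ ∀ j k, star (a j) ⬝ᵥ a k = if j = k then 1 else 0 := by
  rw [mem_unitaryGroup_iff', ← Matrix.ext_iff]
  simp [mul_apply, one_apply, dotProduct]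

theorem sum_sq_norm_apply_eq_one {U : Matrix n n ℂ} (hU : U ∈ unitaryGroup n ℂ) (i : n) :
    ∑ j, ‖U i j‖ ^ 2 = 1 := by
  have h := congr_fun₂ (mem_unitaryGroup_iff.mp hU) i i
  simp only [mul_apply, star_apply, RCLike.star_def, Complex.mul_conj', one_apply_eq] at h
  exact_mod_cast h

theorem sum_norm_sum_mul_le {P Q : Matrix n n ℂ} (hP : P ∈ unitaryGroup n ℂ)
    (hQ : Q ∈ unitaryGroup n ℂ) {w : n → ℝ} (hw : ∀ i, 0 ≤ w i) :
    ∑ j, ‖∑ i, (w i : ℂ) * P i j * Q i j‖ ≤ ∑ i, w i := calc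
  _ ≤ ∑ j, ∑ i, w i * (‖P i j‖ * ‖Q i j‖) := sum_le_sum fun j _ =>
      (norm_sum_le _ _).trans_eq (by simp [abs_of_nonneg (hw _), mul_assoc])
  _ = ∑ i, w i * ∑ j, ‖P i j‖ * ‖Q i j‖ := by rw [sum_comm]; simp only [mul_sum]
  _ ≤ ∑ i, w i * ∑ j, (‖P i j‖ ^ 2 + ‖Q i j‖ ^ 2) / 2 := by
      gcongr with i _ j _
      · exact hw i
      · nlinarith [sq_nonneg (‖P i j‖ - ‖Q i j‖)]
  _ = ∑ i, w i := by
      simp [← sum_div, sum_add_distrib, sum_sq_norm_apply_eq_one hP, sum_sq_norm_apply_eq_one hQ]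

end Unitary

noncomputable def unitaryDFT (N : ℕ) [NeZero N] : Matrix (ZMod N) (ZMod N) ℂ :=
  of fun j k => ZMod.stdAddChar (j * k) / Real.sqrt N

section DFT

variable (N : ℕ) [NeZero N]

theorem norm_unitaryDFT_apply_sq (j k : ZMod N) : ‖unitaryDFT N j k‖ ^ 2 = (N : ℝ)⁻¹ := by
  simp [unitaryDFT, ZMod.stdAddChar_apply, Circle.norm_coe]

theorem unitaryDFT_mem_unitaryGroup : unitaryDFT N ∈ unitaryGroup (ZMod N) ℂ := by
  rw [mem_unitaryGroup_iff', ← Matrix.ext_iff]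
  intro j k
  have hconj : ∀ x : ZMod N, star (ZMod.stdAddChar x) = ZMod.stdAddChar (-x) := fun x => by
    rw [AddChar.map_neg_eq_inv,
      Complex.inv_eq_conj (by simp [ZMod.stdAddChar_apply, Circle.norm_coe])]
    rfl
  have hN : (Real.sqrt N : ℂ) * Real.sqrt N = N := by
    rw [← Complex.ofReal_mul, Real.mul_self_sqrt (Nat.cast_nonneg N)]; simp
  calc (star (unitaryDFT N) * unitaryDFT N) j k
      = (∑ x, ZMod.stdAddChar (x * (k - j))) / N := by
        simp only [mul_apply, star_apply, unitaryDFT, of_apply, star_div₀, hconj, Complex.star_def,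
          Complex.conj_ofReal, div_mul_div_comm, hN, ← sum_div, ← AddChar.map_add_eq_mul]
        congr 1
        exact sum_congr rfl fun x _ => by ring_nf
    _ = (1 : Matrix (ZMod N) (ZMod N) ℂ) j k := by
        rw [AddChar.sum_mulShift _ (ZMod.isPrimitive_stdAddChar N), one_apply]
        by_cases h : j = k
        · simp [h]
        · simp [h, sub_eq_zero, Ne.symm h]

end DFT

theorem exists_mem_unitaryGroup_sq_norm_eq (n : Type*) [Fintype n] [DecidableEq n] [Nonempty n] :
    ∃ F ∈ unitaryGroup n ℂ, ∀ i j, ‖F i j‖ ^ 2 = (Fintype.card n : ℝ)⁻¹ := by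
  have : NeZero (Fintype.card n) := ⟨Fintype.card_ne_zero⟩
  let e : n ≃ ZMod (Fintype.card n) := (Fintype.equivFin n).trans (ZMod.finEquiv _).toEquiv
  refine ⟨(unitaryDFT _).submatrix e e, ?_, fun i j => norm_unitaryDFT_apply_sq _ _ _⟩
  have h := mem_unitaryGroup_iff'.mp (unitaryDFT_mem_unitaryGroup (Fintype.card n))
  rw [mem_unitaryGroup_iff', star_eq_conjTranspose, conjTranspose_submatrix, submatrix_mul_equiv,
    ← star_eq_conjTranspose, h, submatrix_one_equiv]

section RankOne

theorem prod_prod_mul_add_ite {ι R : Type*} [Fintype ι] [DecidableEq ι] [CommSemiring R]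
    (x y : ι → R) (c : R) :
    ∏ j, ∏ k, (x j * y k + if j = k then c else 0) =
      (∏ j, (x j * y j + c)) * (∏ j, x j * y j) ^ (Fintype.card ι - 1) := by
  have hrow : ∀ j, ∏ k, (x j * y k + if j = k then c else 0) =
      (x j * y j + c) * ∏ k ∈ univ.erase j, x j * y k := fun j => by
    rw [← mul_prod_erase univ _ (mem_univ j), if_pos rfl]
    congr 1
    exact prod_congr rfl fun k hk => by rw [if_neg (ne_of_mem_erase hk).symm, add_zero]
  have hoff : ∏ j, ∏ k ∈ univ.erase j, y k = ∏ k, y k ^ (Fintype.card ι - 1) := by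
    rw [prod_comm' (t' := univ) (s' := fun k => univ.erase k) (by simp [ne_comm])]
    simp [prod_const, card_erase_of_mem]
  simp only [hrow, prod_mul_distrib, hoff, prod_const, card_erase_of_mem (mem_univ _), card_univ,
    prod_pow, mul_pow]

variable {m : Type*} [Fintype m] [DecidableEq m]

theorem star_dotProduct_rankOne_add_smul_one_mulVec (α c : ℂ) (v x y : m → ℂ) :
    star x ⬝ᵥ ((α • vecMulVec v (star v) + c • 1) *ᵥ y) =
      α * star (star v ⬝ᵥ x) * (star v ⬝ᵥ y) + c * (star x ⬝ᵥ y) := by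
  have hrank : star x ⬝ᵥ (vecMulVec v (star v) *ᵥ y) = star (star v ⬝ᵥ x) * (star v ⬝ᵥ y) := by
    simp only [dotProduct, mulVec, vecMulVec_apply, star_sum, Pi.star_apply, star_mul', star_star,
      mul_sum, sum_mul]
    rw [sum_comm]
    exact sum_congr rfl fun _ _ => sum_congr rfl fun _ _ => by ring
  rw [add_mulVec, smul_mulVec, smul_mulVec, one_mulVec, dotProduct_add, dotProduct_smul,
    dotProduct_smul, hrank, smul_eq_mul, smul_eq_mul, mul_assoc]

theorem prod_prod_star_dotProduct_rankOne_add_smul_one_mulVec {ι : Type*} [Fintype ι]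
    [DecidableEq ι] (α c : ℝ) (v : m → ℂ) {χ : ι → m → ℂ}
    (hχ : ∀ j k, star (χ j) ⬝ᵥ χ k = if j = k then 1 else 0) :
    ∏ j, ∏ k, star (χ j) ⬝ᵥ (((α : ℂ) • vecMulVec v (star v) + (c : ℂ) • 1) *ᵥ χ k) =
      ((α ^ (Fintype.card ι * (Fintype.card ι - 1)) *
        ∏ j, ‖star v ⬝ᵥ χ j‖ ^ (2 * (Fintype.card ι - 1)) *
          (α * ‖star v ⬝ᵥ χ j‖ ^ 2 + c) : ℝ) : ℂ) := by
  have hsq : ∀ z : ℂ, star z * z = ((‖z‖ ^ 2 : ℝ) : ℂ) := fun z => by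
    rw [mul_comm, RCLike.star_def, Complex.mul_conj']; push_cast; rfl
  simp only [star_dotProduct_rankOne_add_smul_one_mulVec, hχ, mul_ite, mul_one, mul_zero]
  rw [prod_prod_mul_add_ite]
  simp only [mul_assoc, hsq, prod_mul_distrib, prod_const, card_univ, mul_pow, ← pow_mul, prod_pow]
  push_cast
  rw [prod_pow]
  ring

end RankOne

theorem star_prod_dotProduct_prod {m n : Type*} [Fintype m] [Fintype n] (a a' : m → ℂ)
    (b b' : n → ℂ) :
    star (fun p : m × n => a p.1 * b p.2) ⬝ᵥ (fun p : m × n => a' p.1 * b' p.2) =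
      (star a ⬝ᵥ a') * (star b ⬝ᵥ b') := by
  simp only [dotProduct, Pi.star_apply, star_mul', Fintype.sum_prod_type, sum_mul_sum]
  exact sum_congr rfl fun _ _ => sum_congr rfl fun _ _ => by ring

theorem star_dotProduct_prod_eq_sum {n : Type*} [Fintype n] (U V : Matrix n n ℂ) (w : n → ℝ)
    (a b : n → n → ℂ) (j : n) :
    star (fun p : n × n => ∑ i, U p.1 i * V p.2 i * (w i : ℂ)) ⬝ᵥ
        (fun p : n × n => a j p.1 * b j p.2) =
      ∑ i, (w i : ℂ) * (Uᴴ * (of a)ᵀ) i j * (Vᴴ * (of b)ᵀ) i j := by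
  simp only [dotProduct, Pi.star_apply, star_sum, sum_mul]
  rw [sum_comm]
  refine sum_congr rfl fun i _ => ?_
  simp only [mul_apply, conjTranspose_apply, transpose_apply, of_apply, Fintype.sum_prod_type,
    mul_sum, sum_mul]
  rw [sum_comm]
  exact sum_congr rfl fun _ _ => sum_congr rfl fun _ _ => by
    simp only [RCLike.star_def, map_mul, Complex.conj_ofReal]
    ring

section SeparableBasis

variable {n : Type*} [Fintype n] [DecidableEq n]

-- The collectibility `Y^max[ρ]` is the `N`-th root of the greatest element of this set.
def separableBasisProducts (ρ : Matrix (n × n) (n × n) ℂ) : Set ℝ :=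
  { y | ∃ a b : n → n → ℂ,
    (∀ j k, star (a j) ⬝ᵥ a k = if j = k then (1 : ℂ) else 0) ∧
    (∀ j k, star (b j) ⬝ᵥ b k = if j = k then (1 : ℂ) else 0) ∧
    (y : ℂ) = ∏ j, ∏ k, star (fun p : n × n => a j p.1 * b j p.2) ⬝ᵥ
      ρ.mulVec (fun p : n × n => a k p.1 * b k p.2) }

theorem isGreatest_separableBasisProducts_werner [Nonempty n] {U V : Matrix n n ℂ}
    (hU : U ∈ unitaryGroup n ℂ) (hV : V ∈ unitaryGroup n ℂ) {w : n → ℝ} (hw : ∀ i, 0 ≤ w i)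
    {α c : ℝ} (hα : 0 ≤ α) (hc : 0 ≤ c) (hαc : 0 < α ∨ 0 < c) :
    IsGreatest
      (separableBasisProducts ((α : ℂ) • vecMulVec
          (fun p : n × n => ∑ i, U p.1 i * V p.2 i * (w i : ℂ))
          (star fun p : n × n => ∑ i, U p.1 i * V p.2 i * (w i : ℂ)) + (c : ℂ) • 1))
      (α ^ (Fintype.card n * (Fintype.card n - 1)) *
        (((∑ i, w i) / Fintype.card n) ^ (2 * (Fintype.card n - 1)) *
          (α * ((∑ i, w i) / Fintype.card n) ^ 2 + c)) ^ Fintype.card n) := by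
  set v : n × n → ℂ := fun p => ∑ i, U p.1 i * V p.2 i * (w i : ℂ)
  have hval : ∀ a b : n → n → ℂ, (∀ j k, star (a j) ⬝ᵥ a k = if j = k then (1 : ℂ) else 0) →
      (∀ j k, star (b j) ⬝ᵥ b k = if j = k then (1 : ℂ) else 0) →
      ∏ j, ∏ k, star (fun p : n × n => a j p.1 * b j p.2) ⬝ᵥ
        ((α : ℂ) • vecMulVec v (star v) + (c : ℂ) • 1).mulVec
          (fun p : n × n => a k p.1 * b k p.2) =
      ((α ^ (Fintype.card n * (Fintype.card n - 1)) *
        ∏ j, ‖∑ i, (w i : ℂ) * (Uᴴ * (of a)ᵀ) i j * (Vᴴ * (of b)ᵀ) i j‖ ^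
            (2 * (Fintype.card n - 1)) *
          (α * ‖∑ i, (w i : ℂ) * (Uᴴ * (of a)ᵀ) i j * (Vᴴ * (of b)ᵀ) i j‖ ^ 2 + c) : ℝ) : ℂ) :=
    fun a b ha hb => by
      rw [prod_prod_star_dotProduct_rankOne_add_smul_one_mulVec α c v fun j k => by
        rw [star_prod_dotProduct_prod, ha, hb]; split_ifs <;> simp]
      simp only [v, star_dotProduct_prod_eq_sum]
  have hU' : Uᴴ * U = 1 := mem_unitaryGroup_iff'.mp hU
  have hV' : Vᴴ * V = 1 := mem_unitaryGroup_iff'.mp hV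
  constructor
  · obtain ⟨F, hF, hFnorm⟩ := exists_mem_unitaryGroup_sq_norm_eq n
    set a : n → n → ℂ := fun j i => (U * F : Matrix n n ℂ) i j
    set b : n → n → ℂ := fun j i => (V * F.map star : Matrix n n ℂ) i j
    have hA : (of a)ᵀ = U * F := rfl
    have hB : (of b)ᵀ = V * F.map star := rfl
    have ha := transpose_of_mem_unitaryGroup_iff.mp (hA ▸ mul_mem hU hF)
    have hb := transpose_of_mem_unitaryGroup_iff.mp
      (hB ▸ mul_mem hV (map_star_mem_unitaryGroup_iff.mpr hF))
    have hz : ∀ j, ‖∑ i, (w i : ℂ) * (Uᴴ * (of a)ᵀ) i j * (Vᴴ * (of b)ᵀ) i j‖ =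
        (∑ i, w i) / Fintype.card n := fun j => by
      rw [hA, hB, ← mul_assoc, hU', one_mul, ← mul_assoc, hV', one_mul]
      simp only [map_apply, mul_assoc, RCLike.star_def, Complex.mul_conj', ← Complex.ofReal_pow,
        hFnorm, ← Complex.ofReal_mul, ← Complex.ofReal_sum, Complex.norm_real,
        ← div_eq_mul_inv, ← sum_div]
      exact Real.norm_of_nonneg (div_nonneg (sum_nonneg fun i _ => hw i) (Nat.cast_nonneg _))
    refine ⟨a, b, ha, hb, ((hval a b ha hb).trans ?_).symm⟩
    simp only [hz, prod_const, card_univ]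
  · rintro y ⟨a, b, ha, hb, hy⟩
    rw [hval a b ha hb, Complex.ofReal_inj] at hy
    rw [hy]
    gcongr
    exact prod_pow_mul_sq_add_le hα hc hαc (fun j => norm_nonneg _)
      (sum_norm_sum_mul_le
        (mul_mem (Unitary.star_mem hU) (transpose_of_mem_unitaryGroup_iff.mpr ha))
        (mul_mem (Unitary.star_mem hV) (transpose_of_mem_unitaryGroup_iff.mpr hb)) hw)

end SeparableBasis

theorem pow_mul_pow_rpow_inv_natCast {N : ℕ} (hN : 0 < N) {α c m : ℝ} (hα : 0 ≤ α)
    (hm : 0 < m) (hq : 0 ≤ α * m ^ 2 + c) :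
    (α ^ (N * (N - 1)) * (m ^ (2 * (N - 1)) * (α * m ^ 2 + c)) ^ N) ^ (N : ℝ)⁻¹ =
      α ^ (N - 1) * m ^ (2 * N) * (α + c * (m ^ (2 * N)) ^ (-(1 : ℝ) / N)) := by
  have hroot : (m ^ (2 * N)) ^ (-(1 : ℝ) / N) = (m ^ 2)⁻¹ := by
    rw [← Real.rpow_natCast, ← Real.rpow_mul hm.le, Nat.cast_mul,
      show ((2 : ℕ) : ℝ) * N * (-1 / N) = -(2 : ℕ) by field_simp,
      Real.rpow_neg hm.le, Real.rpow_natCast]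
  rw [mul_comm N, pow_mul, ← mul_pow, Real.pow_rpow_inv_natCast (by positivity) hN.ne', hroot]
  obtain ⟨k, rfl⟩ : ∃ k, N = k + 1 := ⟨N - 1, by omega⟩
  rw [Nat.add_sub_cancel, mul_add_one, pow_add]
  field_simp

open Finset Matrix in
theorem werner_collectibility_general {N : ℕ} (hN : 0 < N) (α : ℝ) (hα0 : 0 ≤ α) (hα1 : α ≤ 1)
    (l : Fin N → ℝ) (hsum : ∑ n, l n = 1)
    (U V : Matrix (Fin N) (Fin N) ℂ)
    (hU : U ∈ Matrix.unitaryGroup (Fin N) ℂ) (hV : V ∈ Matrix.unitaryGroup (Fin N) ℂ) :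
    ∃ M : ℝ,
      IsGreatest
        { y : ℝ | ∃ a b : Fin N → Fin N → ℂ,
            (∀ j k, star (a j) ⬝ᵥ a k = if j = k then (1 : ℂ) else 0) ∧
            (∀ j k, star (b j) ⬝ᵥ b k = if j = k then (1 : ℂ) else 0) ∧
            (y : ℂ) = ∏ j : Fin N, ∏ k : Fin N,
              star (fun p : Fin N × Fin N => a j p.1 * b j p.2) ⬝ᵥ
                (((α : ℂ) • Matrix.vecMulVec
                    (fun p : Fin N × Fin N => ∑ n, U p.1 n * V p.2 n * (Real.sqrt (l n) : ℂ))
                    (star fun p : Fin N × Fin N =>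
                      ∑ n, U p.1 n * V p.2 n * (Real.sqrt (l n) : ℂ))
                  + (((1 - α) / N ^ 2 : ℝ) : ℂ) • (1 : Matrix (Fin N × Fin N) (Fin N × Fin N) ℂ)).mulVec
                  (fun p : Fin N × Fin N => a k p.1 * b k p.2)) } M ∧
      M ^ ((N : ℝ)⁻¹)
        = α ^ (N - 1) * ((∑ n, Real.sqrt (l n)) / N) ^ (2 * N) *
            (α + (1 - α) / N ^ 2 *
              (((∑ n, Real.sqrt (l n)) / N) ^ (2 * N)) ^ (-(1 : ℝ) / N)) := by
  have : Nonempty (Fin N) := ⟨⟨0, hN⟩⟩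
  have hc : 0 ≤ (1 - α) / (N : ℝ) ^ 2 := div_nonneg (by linarith) (by positivity)
  have hαc : 0 < α ∨ 0 < (1 - α) / (N : ℝ) ^ 2 := by
    rcases hα0.eq_or_lt with rfl | hα
    · exact Or.inr (div_pos (by norm_num) (by positivity))
    · exact Or.inl hα
  have hs : 0 < ∑ n, Real.sqrt (l n) := by
    obtain ⟨i, -, hi⟩ := exists_lt_of_sum_lt (s := univ) (f := 0) (g := l) (by simp [hsum])
    exact sum_pos' (fun n _ => Real.sqrt_nonneg _) ⟨i, mem_univ i, Real.sqrt_pos.mpr hi⟩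
  have hmax := isGreatest_separableBasisProducts_werner hU hV (fun n => Real.sqrt_nonneg (l n))
    hα0 hc hαc
  rw [Fintype.card_fin] at hmax
  exact ⟨_, hmax, pow_mul_pow_rpow_inv_natCast hN hα0 (by positivity) (by positivity)⟩

open Finset Matrix in
/-- The mixed-state collectibility of the generalized Werner state
`ρ_w = α (U⊗V)|ψ_λ⟩⟨ψ_λ|(U⊗V)† + (1-α)/N² · I` equals
`α^{N-1} y(λ) (α + ((1-α)/N²) y(λ)^{-1/N})` with `y(λ) = ((Σ √λ_n)/N)^{2N}`. -/
theorem werner_collectibility {N : ℕ} (hN : 0 < N) (α : ℝ) (hα0 : 0 ≤ α) (hα1 : α ≤ 1)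
    (l : Fin N → ℝ) (hl : ∀ n, 0 ≤ l n) (hsum : ∑ n, l n = 1)
    (U V : Matrix (Fin N) (Fin N) ℂ)
    (hU : U ∈ Matrix.unitaryGroup (Fin N) ℂ) (hV : V ∈ Matrix.unitaryGroup (Fin N) ℂ) :
    ∃ M : ℝ,
      IsGreatest
        { y : ℝ | ∃ a b : Fin N → Fin N → ℂ,
            (∀ j k, star (a j) ⬝ᵥ a k = if j = k then (1 : ℂ) else 0) ∧
            (∀ j k, star (b j) ⬝ᵥ b k = if j = k then (1 : ℂ) else 0) ∧
            (y : ℂ) = ∏ j : Fin N, ∏ k : Fin N,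
              star (fun p : Fin N × Fin N => a j p.1 * b j p.2) ⬝ᵥ
                (((α : ℂ) • Matrix.vecMulVec
                    (fun p : Fin N × Fin N => ∑ n, U p.1 n * V p.2 n * (Real.sqrt (l n) : ℂ))
                    (star fun p : Fin N × Fin N =>
                      ∑ n, U p.1 n * V p.2 n * (Real.sqrt (l n) : ℂ))
                  + (((1 - α) / N ^ 2 : ℝ) : ℂ) • (1 : Matrix (Fin N × Fin N) (Fin N × Fin N) ℂ)).mulVec
                  (fun p : Fin N × Fin N => a k p.1 * b k p.2)) } M ∧
      M ^ ((N : ℝ)⁻¹)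
        = α ^ (N - 1) * ((∑ n, Real.sqrt (l n)) / N) ^ (2 * N) *
            (α + (1 - α) / N ^ 2 *
              (((∑ n, Real.sqrt (l n)) / N) ^ (2 * N)) ^ (-(1 : ℝ) / N)) :=
  werner_collectibility_general hN α hα0 hα1 l hsum U V hU hV
end
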